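/- Let R be a commutative G-graded ring. The intersection graph Gr_G(R) of graded ideals is disconnected if and only if R is isomorphic (as a graded ring) to a direct product R₁ × R₂ of two G-graded fields. -/

import Mathlib

variable {G R : Type*} [AddGroup G] [DecidableEq G] [CommRing R]

/-- The set of proper nontrivial `G`-graded ideals of `R`. -/
def hV (𝒜 : G → AddSubgroup R) [GradedRing 𝒜] : Set (Ideal R) :=
  {I | I ≠ ⊥ ∧ I ≠ ⊤ ∧ Ideal.IsHomogeneous 𝒜 I}

/-- The intersection graph on a set of ideals: two distinct ideals are
adjacent iff their intersection is nonzero. -/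
def interGraph (V : Set (Ideal R)) : SimpleGraph V where
  Adj I J := I ≠ J ∧ (I : Ideal R) ⊓ (J : Ideal R) ≠ ⊥
  symm := ⟨fun I J ⟨h1, h2⟩ => ⟨h1.symm, by rwa [inf_comm] at h2⟩⟩
  loopless := ⟨fun I ⟨h1, _⟩ => h1 rfl⟩

/-!
If `u` and `v` are vertices in different components, then `u ⊓ v = ⊥`, and no proper homogeneous
`M ≥ u` can meet `v`, since `M` would join `u` to `v`. Taking `M = u ⊔ v` gives `u ⊔ v = ⊤`, so
`R = u ⊕ v`, and by modularity any homogeneous `M > u` meets `v`: hence `u` (and likewise `v`) is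
maximal among proper homogeneous ideals, which says that `R ⧸ u` is a graded field.

Conversely, if `R = I ⊕ J` with `R ⧸ I`, `R ⧸ J` graded fields, then for a homogeneous `K` each of
`K ⊔ I`, `K ⊔ J` is either `⊤` or the ideal itself. Both `⊤` forces `K ⊇ I * J + K = ⊤`, and
`K ≤ I`, `K ⊔ J = ⊤` forces `K = I` by modularity. So `I` and `J` are the only vertices, and they
are not adjacent.
-/

lemma interGraph_reachable_of_inf_ne_bot {V : Set (Ideal R)} {x y : V}
    (h : (x : Ideal R) ⊓ y ≠ ⊥) : (interGraph V).Reachable x y := by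
  by_cases hxy : x = y
  · exact hxy ▸ .rfl
  · exact SimpleGraph.Adj.reachable ⟨hxy, h⟩

section Homogeneous

variable {𝒜 : G → AddSubgroup R} [GradedRing 𝒜]

variable (𝒜) in
/-- `⊤` also satisfies this; for a proper homogeneous `I` it says that `R ⧸ I` is a graded field. -/
def Ideal.IsGradedMaximal (I : Ideal R) : Prop :=
  ∀ M : Ideal R, M.IsHomogeneous 𝒜 → I ≤ M → M ≤ I ∨ M = ⊤

lemma Ideal.IsHomogeneous.exists_homogeneous_mem_not_mem {M I : Ideal R}
    (hM : M.IsHomogeneous 𝒜) (h : ¬ M ≤ I) : ∃ g, ∃ a ∈ 𝒜 g, a ∈ M ∧ a ∉ I := by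
  classical
  obtain ⟨x, hxM, hxI⟩ := SetLike.not_le_iff_exists.mp h
  by_contra! hcomp
  refine hxI ?_
  rw [← DirectSum.sum_support_decompose 𝒜 x]
  exact Ideal.sum_mem I fun g _ => hcomp g _ (SetLike.coe_mem _) (hM g hxM)

lemma Ideal.IsHomogeneous.isGradedMaximal_iff {I : Ideal R} (hI : I.IsHomogeneous 𝒜) :
    I.IsGradedMaximal 𝒜 ↔ ∀ g, ∀ a ∈ 𝒜 g, a ∉ I → ∃ b : R, b * a - 1 ∈ I := by
  constructor
  · intro hmax g a hag haI
    have hspan : (Ideal.span {a} ⊔ I).IsHomogeneous 𝒜 :=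
      (Ideal.homogeneous_span 𝒜 {a} fun x hx => ⟨g, hx ▸ hag⟩).sup hI
    obtain hle | htop := hmax _ hspan le_sup_right
    · exact absurd (hle (Ideal.mem_sup_left (Ideal.mem_span_singleton_self a))) haI
    · obtain ⟨b, i, hi, hbi⟩ :=
        Ideal.mem_span_singleton_sup.mp (htop ▸ Submodule.mem_top (x := 1))
      exact ⟨b, by rwa [show b * a - 1 = -i by linear_combination hbi, neg_mem_iff]⟩
  · intro hfield M hM hIM
    refine or_iff_not_imp_left.mpr fun hMI => ?_
    obtain ⟨g, a, hag, haM, haI⟩ := hM.exists_homogeneous_mem_not_mem hMI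
    obtain ⟨b, hb⟩ := hfield g a hag haI
    rw [Ideal.eq_top_iff_one, show (1 : R) = b * a - (b * a - 1) by ring]
    exact M.sub_mem (M.mul_mem_left b haM) (hIM hb)

section Unreachable

variable {u v : hV 𝒜}

lemma inf_eq_bot_of_not_reachable (huv : ¬ (interGraph (hV 𝒜)).Reachable u v) :
    (u : Ideal R) ⊓ v = ⊥ :=
  not_not.mp (mt interGraph_reachable_of_inf_ne_bot huv)

lemma eq_top_of_not_reachable (huv : ¬ (interGraph (hV 𝒜)).Reachable u v) {M : Ideal R}
    (hM : M.IsHomogeneous 𝒜) (huM : (u : Ideal R) ≤ M) (hMv : M ⊓ v ≠ ⊥) : M = ⊤ := by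
  by_contra hMtop
  let m : hV 𝒜 := ⟨M, ne_bot_of_le_ne_bot u.2.1 huM, hMtop, hM⟩
  have hum : (u : Ideal R) ⊓ M ≠ ⊥ := by rw [inf_eq_left.mpr huM]; exact u.2.1
  exact huv ((interGraph_reachable_of_inf_ne_bot (y := m) hum).trans
    (interGraph_reachable_of_inf_ne_bot hMv))

lemma sup_eq_top_of_not_reachable (huv : ¬ (interGraph (hV 𝒜)).Reachable u v) :
    (u : Ideal R) ⊔ v = ⊤ :=
  eq_top_of_not_reachable huv (u.2.2.2.sup v.2.2.2) le_sup_left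
    (by rw [inf_eq_right.mpr le_sup_right]; exact v.2.1)

lemma isGradedMaximal_of_not_reachable (huv : ¬ (interGraph (hV 𝒜)).Reachable u v) :
    (u : Ideal R).IsGradedMaximal 𝒜 := by
  intro M hM huM
  refine or_iff_not_imp_left.mpr fun hMu =>
    eq_top_of_not_reachable huv hM huM fun hMv => hMu (le_of_eq ?_)
  calc M = ((u : Ideal R) ⊔ v) ⊓ M := by rw [sup_eq_top_of_not_reachable huv, top_inf_eq]
    _ = (u : Ideal R) ⊔ (v : Ideal R) ⊓ M := sup_inf_assoc_of_le _ huM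
    _ = u := by rw [inf_comm, hMv, sup_bot_eq]

end Unreachable

lemma eq_or_eq_of_isGradedMaximal {I J K : Ideal R} (hI : I.IsHomogeneous 𝒜)
    (hJ : J.IsHomogeneous 𝒜) (hinf : I ⊓ J = ⊥) (hsup : I ⊔ J = ⊤)
    (hImax : I.IsGradedMaximal 𝒜) (hJmax : J.IsGradedMaximal 𝒜)
    (hK : K.IsHomogeneous 𝒜) (hKbot : K ≠ ⊥) (hKtop : K ≠ ⊤) : K = I ∨ K = J := by
  have hKI : K ≤ I ∨ K ⊔ I = ⊤ := by
    simpa only [sup_le_iff, le_rfl, and_true] using hImax _ (hK.sup hI) le_sup_right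
  have hKJ : K ≤ J ∨ K ⊔ J = ⊤ := by
    simpa only [sup_le_iff, le_rfl, and_true] using hJmax _ (hK.sup hJ) le_sup_right
  rcases hKI with hKI | hKI <;> rcases hKJ with hKJ | hKJ
  · exact absurd (eq_bot_iff.mpr (hinf ▸ le_inf hKI hKJ)) hKbot
  · refine .inl (eq_of_le_of_inf_le_of_sup_le hKI (z := J) ?_ ?_)
    · rw [hinf]; exact bot_le
    · rw [hsup, hKJ]
  · refine .inr (eq_of_le_of_inf_le_of_sup_le hKJ (z := I) ?_ ?_)
    · rw [inf_comm, hinf]; exact bot_le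
    · rw [sup_comm, hsup, hKI]
  · refine absurd ?_ hKtop
    have hIJ : I * J = ⊥ := eq_bot_iff.mpr (hinf ▸ Ideal.mul_le_inf)
    rw [← sup_bot_eq K, ← hIJ, Ideal.sup_mul_eq_of_coprime_left hKI, hKJ]

end Homogeneous

theorem stmt2_general (𝒜 : G → AddSubgroup R) [GradedRing 𝒜] :
    ¬ (interGraph (hV 𝒜)).Preconnected ↔
      ∃ I J : Ideal R, Ideal.IsHomogeneous 𝒜 I ∧ Ideal.IsHomogeneous 𝒜 J ∧
        I ⊓ J = ⊥ ∧ I ⊔ J = ⊤ ∧ I ≠ ⊤ ∧ J ≠ ⊤ ∧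
        (∀ (g : G), ∀ a ∈ 𝒜 g, a ∉ I → ∃ b : R, b * a - 1 ∈ I) ∧
        (∀ (g : G), ∀ a ∈ 𝒜 g, a ∉ J → ∃ b : R, b * a - 1 ∈ J) := by
  constructor
  · intro h
    obtain ⟨u, v, huv⟩ : ∃ u v, ¬ (interGraph (hV 𝒜)).Reachable u v := by
      simpa [SimpleGraph.Preconnected] using h
    have hvu : ¬ (interGraph (hV 𝒜)).Reachable v u := fun h => huv h.symm
    exact ⟨u, v, u.2.2.2, v.2.2.2, inf_eq_bot_of_not_reachable huv,
      sup_eq_top_of_not_reachable huv, u.2.2.1, v.2.2.1,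
      u.2.2.2.isGradedMaximal_iff.mp (isGradedMaximal_of_not_reachable huv),
      v.2.2.2.isGradedMaximal_iff.mp (isGradedMaximal_of_not_reachable hvu)⟩
  · rintro ⟨I, J, hI, hJ, hinf, hsup, hItop, hJtop, hIfield, hJfield⟩ hconn
    have hIbot : I ≠ ⊥ := fun h => hJtop (by rwa [h, bot_sup_eq] at hsup)
    let i : hV 𝒜 := ⟨I, hIbot, hItop, hI⟩
    let j : hV 𝒜 := ⟨J, fun h => hItop (by rwa [h, sup_bot_eq] at hsup), hJtop, hJ⟩
    have hij : i ≠ j := fun h => hIbot <| by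
      simpa [show I = J from congrArg Subtype.val h] using hinf
    have : Nontrivial (hV 𝒜) := nontrivial_of_ne i j hij
    obtain ⟨⟨K, hKbot, hKtop, hK⟩, hiK, hIK⟩ := hconn.exists_adj_of_nontrivial i
    obtain rfl | rfl := eq_or_eq_of_isGradedMaximal hI hJ hinf hsup
      (hI.isGradedMaximal_iff.mpr hIfield) (hJ.isGradedMaximal_iff.mpr hJfield) hK hKbot hKtop
    · exact hiK rfl
    · exact hIK hinf

/-- For a commutative `G`-graded ring `R` (with `1 ≠ 0`), the
intersection graph of graded ideals is disconnected iff `R ≅ R/I × R/J` for a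
complementary pair of graded ideals `I, J` whose quotients are `G`-graded fields,
i.e. `R` is a direct product of two `G`-graded fields.  "Every nonzero homogeneous
element of `R/I` is a unit" is expressed as: for every homogeneous `a ∉ I` there is
`b` with `b * a - 1 ∈ I`. -/
theorem stmt2 (𝒜 : G → AddSubgroup R) [GradedRing 𝒜] [Nontrivial R] :
    ¬ (interGraph (hV 𝒜)).Preconnected ↔
      ∃ I J : Ideal R, Ideal.IsHomogeneous 𝒜 I ∧ Ideal.IsHomogeneous 𝒜 J ∧
        I ⊓ J = ⊥ ∧ I ⊔ J = ⊤ ∧ I ≠ ⊤ ∧ J ≠ ⊤ ∧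
        (∀ (g : G), ∀ a ∈ 𝒜 g, a ∉ I → ∃ b : R, b * a - 1 ∈ I) ∧
        (∀ (g : G), ∀ a ∈ 𝒜 g, a ∉ J → ∃ b : R, b * a - 1 ∈ J) :=
  stmt2_general 𝒜
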